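/- arXiv:2101.10748 — 2 statements merged into one kernel-verified Lean document; each statement's English description precedes it below -/
import Mathlib

section
/- First Visit Time Lemma, identification of the rate: under (HP1)–(HP3), | λ_n / (1 − π_n(x_n)/R_{T_n}(x_n)) − 1 | → 0 as n → ∞, where R_{T_n}(x_n) := Σ_{t=0}^{T_n} P_n^t(x_n, x_n) ≥ 1 is the expected number of returns to x_n within time T_n. -/
/-!
Since `π(x) ≤ T π(x) → 0` and `R_T(x) ≥ 1`, it suffices to show `λ → 1`.

Let `K` be the kernel killed at `x` and `h(y) = Σ_{s=1}^{T} P^s(y, x)` the expected number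
of visits to `x` up to time `T`. For `y ≠ x` the survival probability `Σ_z K^T(y, z)` is at
least `1 - h(y)`, and `Σ_y π(y) h(y) = T π(x)` by stationarity, so by Markov's inequality most
of the stationary mass lies on `G = {y ≠ x | h(y) ≤ 1/4}`. Since `P^T ≤ π + η` entrywise with
`n η` small, the chain started in `G` is at time `T` alive and in `G` with probability about
`3/4` at least; testing `μ K^T = λ^T μ` on `G` (where `μ(G) > 0` because `K` is irreducible)
gives `λ^T ≥ 1/2`. Then `λ^T μ ≤ μ P^T ≤ π + η`, so `1 - λ = Σ_y μ(y) P(y, x) ≤ 2 (π(x) + n η)`.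
-/

open Finset Filter

/-- The kernel of the chain killed at `x`: all entries from or to `x` are set to zero.
For `y, z ≠ x` the powers of `killed P x` agree with the powers of the principal
submatrix `[P]_x` of `P` obtained by deleting the row and the column indexed by `x`. -/
def killed {n : ℕ} (P : Matrix (Fin n) (Fin n) ℝ) (x : Fin n) :
    Matrix (Fin n) (Fin n) ℝ :=
  Matrix.of fun y z => if y = x ∨ z = x then 0 else P y z

/-- The no-hit probability `ℙ_α(τ_x > t) = Σ_{y ≠ x} Σ_{z ≠ x} α(y)·([P]_x)^t(y,z)`. -/
def noHit {n : ℕ} (P : Matrix (Fin n) (Fin n) ℝ) (x : Fin n)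
    (a : Fin n → ℝ) (t : ℕ) : ℝ :=
  ∑ y ∈ Finset.univ.erase x, ∑ z ∈ Finset.univ.erase x, a y * ((killed P x) ^ t) y z

/-- The expected number of returns to `x` within time `T`:
`R_T(x) = Σ_{t=0}^{T} P^t(x,x)`. -/
def returns {n : ℕ} (P : Matrix (Fin n) (Fin n) ℝ) (x : Fin n) (T : ℕ) : ℝ :=
  ∑ t ∈ Finset.range (T + 1), (P ^ t) x x

open Matrix Topology

theorem Finset.mul_sum_filter_lt_le {ι : Type*} {s : Finset ι} {w f : ι → ℝ}
    (hw : ∀ i ∈ s, 0 ≤ w i) (hf : ∀ i ∈ s, 0 ≤ f i) (a : ℝ) :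
    a * ∑ i ∈ s with a < f i, w i ≤ ∑ i ∈ s, w i * f i := by
  rw [mul_sum]
  calc ∑ i ∈ s with a < f i, a * w i ≤ ∑ i ∈ s with a < f i, w i * f i :=
        sum_le_sum fun i hi => by
          rw [mem_filter] at hi
          nlinarith [hw i hi.1]
    _ ≤ ∑ i ∈ s, w i * f i := sum_le_sum_of_subset_of_nonneg (filter_subset _ s)
        fun i hi _ => mul_nonneg (hw i hi) (hf i hi)

namespace Matrix

variable {ι R : Type*} [Fintype ι]

theorem pow_apply_le_pow_apply [DecidableEq ι] [Semiring R] [PartialOrder R] [IsOrderedRing R]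
    {A B : Matrix ι ι R} (hA : ∀ i j, 0 ≤ A i j) (hAB : ∀ i j, A i j ≤ B i j) (k : ℕ) :
    ∀ i j, (A ^ k) i j ≤ (B ^ k) i j := by
  induction k with
  | zero => exact fun _ _ => le_rfl
  | succ k ih =>
    intro i j
    simp only [pow_succ, mul_apply]
    exact sum_le_sum fun l _ => mul_le_mul (ih i l) (hAB l j) (hA l j)
      (pow_apply_nonneg (fun i j => (hA i j).trans (hAB i j)) k i l)

theorem vecMul_pow_of_vecMul_eq_smul [DecidableEq ι] [CommSemiring R] {A : Matrix ι ι R}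
    {v : ι → R} {c : R} (h : v ᵥ* A = c • v) (k : ℕ) : v ᵥ* A ^ k = c ^ k • v := by
  induction k with
  | zero => simp
  | succ k ih => rw [pow_succ, ← vecMul_vecMul, ih, smul_vecMul, h, smul_smul, pow_succ]

theorem le_of_vecMul_eq_smul {A : Matrix ι ι ℝ} {v : ι → ℝ} {c a : ℝ} {G : Finset ι}
    (hA : ∀ i j, 0 ≤ A i j) (hv : ∀ i, 0 ≤ v i) (h : v ᵥ* A = c • v)
    (hG : 0 < ∑ i ∈ G, v i) (hrow : ∀ i ∈ G, a ≤ ∑ j ∈ G, A i j) : a ≤ c := by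
  refine le_of_mul_le_mul_right ?_ hG
  calc a * ∑ i ∈ G, v i ≤ ∑ i ∈ G, v i * ∑ j ∈ G, A i j := by
        rw [mul_sum]
        exact sum_le_sum fun i hi => by
          rw [mul_comm]; exact mul_le_mul_of_nonneg_left (hrow i hi) (hv i)
    _ = ∑ j ∈ G, ∑ i ∈ G, v i * A i j := by simp_rw [mul_sum]; exact sum_comm
    _ ≤ ∑ j ∈ G, (v ᵥ* A) j := sum_le_sum fun j _ =>
        sum_le_sum_of_subset_of_nonneg (subset_univ G) fun i _ _ => mul_nonneg (hv i) (hA i j)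
    _ = c * ∑ i ∈ G, v i := by simp [h, mul_sum]

theorem sum_mul_sum_range_pow_apply [DecidableEq ι]
    {P : Matrix ι ι ℝ} {π : ι → ℝ} (hπ : π ᵥ* P = π) (t : ℕ) (j : ι) :
    ∑ i, π i * ∑ s ∈ range t, (P ^ (s + 1)) i j = t * π j := by
  have hπt (s : ℕ) : π ᵥ* P ^ s = π := by
    simpa using vecMul_pow_of_vecMul_eq_smul (c := 1) (v := π) (by rwa [one_smul]) s
  simp_rw [mul_sum]
  rw [sum_comm]
  simp [← vecMul_apply_eq_sum, hπt]

end Matrix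

section Killed

variable {n : ℕ} {P : Matrix (Fin n) (Fin n) ℝ} {x y z : Fin n}

theorem killed_apply_of_ne (hy : y ≠ x) (hz : z ≠ x) : killed P x y z = P y z := by
  simp [killed, hy, hz]

@[simp]
theorem killed_apply_right : killed P x y x = 0 := by
  simp [killed]

theorem killed_nonneg (hP : ∀ i j, 0 ≤ P i j) (i j : Fin n) : 0 ≤ killed P x i j := by
  simp only [killed, of_apply]; split_ifs <;> simp_all

theorem killed_le (hP : ∀ i j, 0 ≤ P i j) (i j : Fin n) : killed P x i j ≤ P i j := by
  simp only [killed, of_apply]; split_ifs <;> simp_all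

theorem killed_pow_apply_right (hy : y ≠ x) (t : ℕ) : (killed P x ^ t) y x = 0 := by
  cases t with
  | zero => simp [one_apply_ne hy]
  | succ t => simp [pow_succ, mul_apply]

theorem sum_killed_apply (hP : P ∈ rowStochastic ℝ (Fin n)) (hy : y ≠ x) :
    ∑ z, killed P x y z = 1 - P y x := by
  rw [← sum_row_of_mem_rowStochastic hP y, ← add_sum_erase _ _ (mem_univ x),
    ← add_sum_erase _ _ (mem_univ x), killed_apply_right]
  have : ∀ z ∈ univ.erase x, killed P x y z = P y z := fun z hz =>
    killed_apply_of_ne hy (ne_of_mem_erase hz)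
  rw [sum_congr rfl this]
  ring

/-- First-passage decomposition: `(killed P x ^ s * P) y x` is the probability that the chain
started at `y` hits `x` for the first time at time `s + 1`. -/
theorem sum_killed_pow_apply (hP : P ∈ rowStochastic ℝ (Fin n)) (hy : y ≠ x) (t : ℕ) :
    ∑ z, (killed P x ^ t) y z = 1 - ∑ s ∈ range t, (killed P x ^ s * P) y x := by
  induction t with
  | zero => simp [one_apply]
  | succ t ih =>
    have hrow : ∀ w, (killed P x ^ t) y w * ∑ z, killed P x w z
        = (killed P x ^ t) y w * (1 - P w x) := fun w => by
      rcases eq_or_ne w x with rfl | hw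
      · simp [killed_pow_apply_right hy]
      · rw [sum_killed_apply hP hw]
    calc ∑ z, (killed P x ^ (t + 1)) y z
        = ∑ w, (killed P x ^ t) y w * ∑ z, killed P x w z := by
          simp only [pow_succ, mul_apply, mul_sum]; exact sum_comm
      _ = ∑ w, (killed P x ^ t) y w - (killed P x ^ t * P) y x := by
          simp only [hrow, mul_sub, mul_one, sum_sub_distrib, mul_apply]
      _ = _ := by rw [ih, sum_range_succ]; ring

theorem one_sub_sum_killed_pow_apply_le (hP : P ∈ rowStochastic ℝ (Fin n)) (hy : y ≠ x)
    (t : ℕ) : 1 - ∑ z, (killed P x ^ t) y z ≤ ∑ s ∈ range t, (P ^ (s + 1)) y x := by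
  have hK := killed_nonneg (x := x) hP.1
  rw [sum_killed_pow_apply hP hy, sub_sub_cancel]
  refine sum_le_sum fun s _ => ?_
  simp only [pow_succ, mul_apply]
  exact sum_le_sum fun w _ => mul_le_mul_of_nonneg_right
    (pow_apply_le_pow_apply hK (killed_le hP.1) s y w) (hP.1 w x)

end Killed

section QuasiStationary

variable {n : ℕ} {P : Matrix (Fin n) (Fin n) ℝ} {x : Fin n} {μ π : Fin n → ℝ} {lam η : ℝ}
  {T : ℕ}

theorem quasiStationary_eigenvalue_eq (hP : P ∈ rowStochastic ℝ (Fin n))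
    (hμx : μ x = 0) (hμ1 : ∑ y, μ y = 1) (hqs : μ ᵥ* killed P x = lam • μ) :
    lam = 1 - ∑ y, μ y * P y x := by
  have hrow : ∀ y, μ y * ∑ z, killed P x y z = μ y * (1 - P y x) := fun y => by
    rcases eq_or_ne y x with rfl | hy
    · simp [hμx]
    · rw [sum_killed_apply hP hy]
  calc lam = ∑ z, (μ ᵥ* killed P x) z := by simp [hqs, ← mul_sum, hμ1]
    _ = ∑ y, μ y * ∑ z, killed P x y z := by
        simp only [vecMul_apply_eq_sum, mul_sum]; exact sum_comm
    _ = 1 - ∑ y, μ y * P y x := by simp [hrow, mul_sub, hμ1]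

theorem quasiStationary_pos (hP : ∀ i j, 0 ≤ P i j) (hμ : ∀ y, 0 ≤ μ y) (hμx : μ x = 0)
    (hμ1 : ∑ y, μ y = 1) (hlam : 0 < lam) (hqs : μ ᵥ* killed P x = lam • μ)
    (hirr : ∀ y z, y ≠ x → z ≠ x → ∃ t : ℕ, 0 < (killed P x ^ t) y z) {z : Fin n}
    (hz : z ≠ x) : 0 < μ z := by
  obtain ⟨y, -, hy⟩ : ∃ y ∈ univ, (0 : Fin n → ℝ) y < μ y :=
    exists_lt_of_sum_lt (by simp [hμ1])
  obtain ⟨t, ht⟩ := hirr y z (fun h => by simp [h, hμx] at hy) hz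
  have hKt := Matrix.pow_apply_nonneg (killed_nonneg (x := x) hP) t
  refine pos_of_mul_pos_right (a := lam ^ t) ?_ (pow_nonneg hlam.le t)
  calc 0 < μ y * (killed P x ^ t) y z := mul_pos hy ht
    _ ≤ ∑ w, μ w * (killed P x ^ t) w z :=
        single_le_sum (f := fun w => μ w * (killed P x ^ t) w z)
          (fun w _ => mul_nonneg (hμ w) (hKt w z)) (mem_univ y)
    _ = lam ^ t * μ z := by
        rw [← vecMul_apply_eq_sum, vecMul_pow_of_vecMul_eq_smul hqs]; rfl

theorem pow_mul_quasiStationary_le (hP : ∀ i j, 0 ≤ P i j) (hμ : ∀ y, 0 ≤ μ y)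
    (hμ1 : ∑ y, μ y = 1) (hqs : μ ᵥ* killed P x = lam • μ) {z : Fin n} {b : ℝ}
    (hmix : ∀ y, (P ^ T) y z ≤ b) : lam ^ T * μ z ≤ b :=
  calc lam ^ T * μ z = ∑ y, μ y * (killed P x ^ T) y z := by
        rw [← vecMul_apply_eq_sum, vecMul_pow_of_vecMul_eq_smul hqs]; rfl
    _ ≤ ∑ y, μ y * b := sum_le_sum fun y _ => mul_le_mul_of_nonneg_left
        ((pow_apply_le_pow_apply (killed_nonneg hP) (killed_le hP) T y z).trans
          (hmix y)) (hμ y)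
    _ = b := by rw [← sum_mul, hμ1, one_mul]

theorem one_sub_mul_pow_le (hP : P ∈ rowStochastic ℝ (Fin n)) (hπ : π ᵥ* P = π)
    (hμ : ∀ y, 0 ≤ μ y) (hμx : μ x = 0) (hμ1 : ∑ y, μ y = 1)
    (hqs : μ ᵥ* killed P x = lam • μ) (hη : 0 ≤ η) (hmix : ∀ y z, (P ^ T) y z ≤ π z + η) :
    (1 - lam) * lam ^ T ≤ π x + n * η :=
  calc (1 - lam) * lam ^ T = ∑ y, lam ^ T * μ y * P y x := by
        rw [quasiStationary_eigenvalue_eq hP hμx hμ1 hqs, sub_sub_cancel, mul_comm, mul_sum]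
        simp only [mul_assoc]
    _ ≤ ∑ y, (π y + η) * P y x := sum_le_sum fun y _ => mul_le_mul_of_nonneg_right
        (pow_mul_quasiStationary_le hP.1 hμ hμ1 hqs fun w => hmix w y) (hP.1 y x)
    _ = π x + η * ∑ y, P y x := by
        simp only [add_mul, sum_add_distrib, ← mul_sum, ← vecMul_apply_eq_sum, hπ]
    _ ≤ π x + n * η := by
        have : ∑ y, P y x ≤ n := by
          simpa using sum_le_card_nsmul univ (P · x) 1
            fun y _ => le_one_of_mem_rowStochastic hP
        nlinarith

end QuasiStationary

theorem le_add_div_of_rpow_mul_abs_sub_lt {n c a b δ : ℝ} (hn : 1 ≤ n) (hc : 1 ≤ c)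
    (h : n ^ c * |a - b| < δ) : a ≤ b + δ / n := by
  have := Real.self_le_rpow_of_one_le hn hc
  rw [← sub_le_iff_le_add', le_div_iff₀ (by linarith)]
  nlinarith [le_abs_self (a - b), abs_nonneg (a - b)]

theorem one_le_returns {n : ℕ} {P : Matrix (Fin n) (Fin n) ℝ} (hP : ∀ i j, 0 ≤ P i j)
    (x : Fin n) (T : ℕ) : 1 ≤ returns P x T := by
  rw [returns, sum_range_succ']
  simpa using sum_nonneg fun t _ => pow_apply_nonneg hP (t + 1) x x

section Mixing

variable {n : ℕ} {P : Matrix (Fin n) (Fin n) ℝ} {x : Fin n} {μ π : Fin n → ℝ} {lam η : ℝ}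
  {T : ℕ}

theorem sum_sub_le_sum_killed_pow_apply (hP : P ∈ rowStochastic ℝ (Fin n))
    (hπ1 : ∑ z, π z = 1) (hη : 0 ≤ η) {y : Fin n} (hmix : ∀ z, (P ^ T) y z ≤ π z + η)
    (hy : y ≠ x) (G : Finset (Fin n)) :
    ∑ z ∈ G, π z - n * η - ∑ s ∈ range T, (P ^ (s + 1)) y x
      ≤ ∑ z ∈ G, (killed P x ^ T) y z := by
  have hKP : ∑ z ∈ Gᶜ, (killed P x ^ T) y z ≤ ∑ z ∈ Gᶜ, (P ^ T) y z :=
    sum_le_sum fun z _ => pow_apply_le_pow_apply (killed_nonneg hP.1) (killed_le hP.1) T y z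
  have hmixG : ∑ z ∈ Gᶜ, (P ^ T) y z ≤ ∑ z ∈ Gᶜ, π z + n * η :=
    calc _ ≤ ∑ z ∈ Gᶜ, (π z + η) := sum_le_sum fun z _ => hmix z
      _ ≤ _ := by
        rw [sum_add_distrib, sum_const, nsmul_eq_mul]
        gcongr
        exact_mod_cast (card_le_univ _).trans (Fintype.card_fin n).le
  have := sum_add_sum_compl G fun z => (killed P x ^ T) y z
  have := sum_add_sum_compl G π
  have := one_sub_sum_killed_pow_apply_le hP hy T
  linarith

theorem le_pow_of_mixing (hP : P ∈ rowStochastic ℝ (Fin n)) (hπ0 : ∀ y, 0 ≤ π y)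
    (hπ1 : ∑ y, π y = 1) (hπ : π ᵥ* P = π) (hμ : ∀ y, 0 ≤ μ y) (hμx : μ x = 0)
    (hμ1 : ∑ y, μ y = 1) (hlam : 0 < lam) (hqs : μ ᵥ* killed P x = lam • μ)
    (hirr : ∀ y z, y ≠ x → z ≠ x → ∃ t : ℕ, 0 < (killed P x ^ t) y z) (hη : 0 ≤ η)
    (hmix : ∀ y z, (P ^ T) y z ≤ π z + η) :
    3 / 4 - (π x + 4 * (T * π x) + n * η) ≤ lam ^ T := by
  set visits : Fin n → ℝ := fun y => ∑ s ∈ range T, (P ^ (s + 1)) y x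
  have hvisits : ∀ y, 0 ≤ visits y := fun y => sum_nonneg fun s _ => pow_apply_nonneg hP.1 _ y x
  set G := {y ∈ univ.erase x | visits y ≤ 1 / 4}
  have hG : 1 - π x - 4 * (T * π x) ≤ ∑ y ∈ G, π y := by
    have hmarkov := mul_sum_filter_lt_le (s := univ.erase x) (fun y _ => hπ0 y)
      (fun y _ => hvisits y) (1 / 4)
    have hvisits_avg : ∑ y ∈ univ.erase x, π y * visits y ≤ T * π x :=
      sum_mul_sum_range_pow_apply hπ T x ▸ sum_le_sum_of_subset_of_nonneg (erase_subset x univ)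
        fun y _ _ => mul_nonneg (hπ0 y) (hvisits y)
    have hsplit := sum_filter_add_sum_filter_not (univ.erase x) (fun y => visits y ≤ 1 / 4) π
    simp only [not_le] at hsplit
    have := add_sum_erase univ π (mem_univ x)
    linarith
  have hrowG : ∀ y ∈ G, ∑ z ∈ G, π z - n * η - 1 / 4 ≤ ∑ z ∈ G, (killed P x ^ T) y z :=
    fun y hy => by
      rw [mem_filter, mem_erase] at hy
      linarith [sum_sub_le_sum_killed_pow_apply hP hπ1 hη (hmix y) hy.1.1 G]
  rcases le_or_gt (∑ z ∈ G, π z - n * η - 1 / 4) 0 with hle | hlt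
  · linarith [pow_pos hlam T]
  have hGμ : 0 < ∑ y ∈ G, μ y := by
    obtain ⟨y, hy⟩ := nonempty_of_sum_ne_zero (s := G) (f := π) (by nlinarith)
    exact sum_pos' (fun y _ => hμ y) ⟨y, hy, quasiStationary_pos hP.1 hμ hμx hμ1 hlam hqs hirr
      (mem_erase.1 (mem_filter.1 hy).1).1⟩
  linarith [le_of_vecMul_eq_smul (pow_apply_nonneg (killed_nonneg hP.1) T) hμ
    (vecMul_pow_of_vecMul_eq_smul hqs T) hGμ hrowG]

theorem one_sub_le_of_mixing (hP : P ∈ rowStochastic ℝ (Fin n)) (hπ0 : ∀ y, 0 ≤ π y)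
    (hπ1 : ∑ y, π y = 1) (hπ : π ᵥ* P = π) (hμ : ∀ y, 0 ≤ μ y) (hμx : μ x = 0)
    (hμ1 : ∑ y, μ y = 1) (hlam : 0 < lam) (hqs : μ ᵥ* killed P x = lam • μ)
    (hirr : ∀ y z, y ≠ x → z ≠ x → ∃ t : ℕ, 0 < (killed P x ^ t) y z) (hη : 0 ≤ η)
    (hmix : ∀ y z, (P ^ T) y z ≤ π z + η) {δ : ℝ} (hδ : δ ≤ 1 / 24) (hT : 1 ≤ T)
    (hTπx : T * π x ≤ δ) (hnη : n * η ≤ δ) :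
    1 - lam ≤ 4 * δ := by
  have hπx : π x ≤ δ := (le_mul_of_one_le_left (hπ0 x) (by exact_mod_cast hT)).trans hTπx
  have hlam1 : 0 ≤ 1 - lam := by
    rw [quasiStationary_eigenvalue_eq hP hμx hμ1 hqs, sub_sub_cancel]
    exact sum_nonneg fun y _ => mul_nonneg (hμ y) (hP.1 y x)
  have hpow := le_pow_of_mixing hP hπ0 hπ1 hπ hμ hμx hμ1 hlam hqs hirr hη hmix
  have hgap := one_sub_mul_pow_le hP hπ hμ hμx hμ1 hqs hη hmix
  nlinarith [mul_le_mul_of_nonneg_left hpow hlam1]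

end Mixing

theorem fvtl_rate_identification_general
    (P : (n : ℕ) → Matrix (Fin n) (Fin n) ℝ)
    (pi : (n : ℕ) → Fin n → ℝ)
    (x : (n : ℕ) → Fin n)
    (T : ℕ → ℕ) (c : ℝ)
    (hc : 2 < c)
    (hT : Filter.Tendsto T Filter.atTop Filter.atTop)
    (hnn : ∀ n : ℕ, 2 ≤ n → ∀ y z : Fin n, 0 ≤ P n y z)
    (hrow : ∀ n : ℕ, 2 ≤ n → ∀ y : Fin n, ∑ z, P n y z = 1)
    (hpinn : ∀ n : ℕ, 2 ≤ n → ∀ y : Fin n, 0 ≤ pi n y)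
    (hpisum : ∀ n : ℕ, 2 ≤ n → ∑ y, pi n y = 1)
    (hpistat : ∀ n : ℕ, 2 ≤ n → Matrix.vecMul (pi n) (P n) = pi n)
    (hkirr : ∀ n : ℕ, 2 ≤ n → ∀ y z : Fin n, y ≠ x n → z ≠ x n →
      ∃ t : ℕ, 0 < ((killed (P n) (x n)) ^ t) y z)
    (lam : ℕ → ℝ) (mu : (n : ℕ) → Fin n → ℝ)
    (hlam : ∀ n : ℕ, 2 ≤ n → lam n ∈ Set.Ioo (0 : ℝ) 1)
    (hmunn : ∀ n : ℕ, 2 ≤ n → ∀ y : Fin n, 0 ≤ mu n y)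
    (hmux : ∀ n : ℕ, 2 ≤ n → mu n (x n) = 0)
    (hmusum : ∀ n : ℕ, 2 ≤ n → ∑ y, mu n y = 1)
    (hmuqs : ∀ n : ℕ, 2 ≤ n →
      Matrix.vecMul (mu n) (killed (P n) (x n)) = lam n • mu n)
    (HP1 : ∀ ε : ℝ, 0 < ε → ∃ N : ℕ, ∀ n : ℕ, N ≤ n → ∀ y z : Fin n,
      (n : ℝ) ^ c * |(P n ^ T n) y z - pi n z| < ε)
    (HP2 : ∀ ε : ℝ, 0 < ε → ∃ N : ℕ, ∀ n : ℕ, N ≤ n → ∀ y : Fin n,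
      (T n : ℝ) * pi n y < ε)
    :
    Filter.Tendsto
      (fun n => |lam n / (1 - pi n (x n) / returns (P n) (x n) (T n)) - 1|)
      Filter.atTop (nhds (0 : ℝ)) := by
  have hTπ (δ : ℝ) (hδ : 0 < δ) : ∀ᶠ n in atTop, (T n : ℝ) * pi n (x n) < δ :=
    eventually_atTop.2 ((HP2 δ hδ).imp fun _ hN n hn => hN n hn (x n))
  have hq : Tendsto (fun n => pi n (x n) / returns (P n) (x n) (T n)) atTop (𝓝 0) := by
    refine tendsto_order.2 ⟨fun a ha => (eventually_ge_atTop 2).mono fun n hn => ?_,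
      fun a ha => ?_⟩
    · exact ha.trans_le <| div_nonneg (hpinn n hn _) <|
        zero_le_one.trans (one_le_returns (hnn n hn) _ _)
    · filter_upwards [eventually_ge_atTop 2, hT.eventually_ge_atTop 1, hTπ a ha] with n hn hTn h
      calc _ ≤ pi n (x n) := div_le_self (hpinn n hn _) (one_le_returns (hnn n hn) _ _)
        _ ≤ T n * pi n (x n) := le_mul_of_one_le_left (hpinn n hn _) (by exact_mod_cast hTn)
        _ < a := h
  have hlim : Tendsto lam atTop (𝓝 1) := by
    refine tendsto_order.2 ⟨fun a ha => ?_,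
      fun a ha => (eventually_ge_atTop 2).mono fun n hn => (hlam n hn).2.trans ha⟩
    obtain ⟨δ, hδ, hδ24, hδa⟩ : ∃ δ : ℝ, 0 < δ ∧ δ ≤ 1 / 24 ∧ 4 * δ < 1 - a :=
      ⟨min (1 / 24) ((1 - a) / 8), by positivity, min_le_left _ _,
        by linarith [min_le_right (1 / 24 : ℝ) ((1 - a) / 8)]⟩
    filter_upwards [eventually_ge_atTop 2, hT.eventually_ge_atTop 1, hTπ δ hδ,
      eventually_atTop.2 (HP1 δ hδ)] with n hn hTn hTπn hmixn
    have hmix : ∀ y z, (P n ^ T n) y z ≤ pi n z + δ / n := fun y z =>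
      le_add_div_of_rpow_mul_abs_sub_lt (by exact_mod_cast (by omega : 1 ≤ n)) (by linarith)
        (hmixn y z)
    have := one_sub_le_of_mixing (mem_rowStochastic_iff_sum.2 ⟨hnn n hn, hrow n hn⟩)
      (hpinn n hn) (hpisum n hn) (hpistat n hn) (hmunn n hn) (hmux n hn) (hmusum n hn)
      (hlam n hn).1 (hmuqs n hn) (hkirr n hn) (by positivity) hmix hδ24 hTn hTπn.le
      (by rw [mul_div_cancel₀ _ (by positivity)])
    linarith
  have := (hlim.div (tendsto_const_nhds (x := (1 : ℝ)) |>.sub hq) (by norm_num)).sub_const 1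
  simpa using this.abs

theorem fvtl_rate_identification
    (P : (n : ℕ) → Matrix (Fin n) (Fin n) ℝ)
    (pi : (n : ℕ) → Fin n → ℝ)
    (x : (n : ℕ) → Fin n)
    (T : ℕ → ℕ) (c : ℝ)
    (hc : 2 < c)
    (hT : Filter.Tendsto T Filter.atTop Filter.atTop)
    (hnn : ∀ n : ℕ, 2 ≤ n → ∀ y z : Fin n, 0 ≤ P n y z)
    (hrow : ∀ n : ℕ, 2 ≤ n → ∀ y : Fin n, ∑ z, P n y z = 1)
    (hirr : ∀ n : ℕ, 2 ≤ n → ∀ y z : Fin n, ∃ t : ℕ, 0 < (P n ^ t) y z)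
    (hpinn : ∀ n : ℕ, 2 ≤ n → ∀ y : Fin n, 0 ≤ pi n y)
    (hpisum : ∀ n : ℕ, 2 ≤ n → ∑ y, pi n y = 1)
    (hpistat : ∀ n : ℕ, 2 ≤ n → Matrix.vecMul (pi n) (P n) = pi n)
    (hpiuniq : ∀ n : ℕ, 2 ≤ n → ∀ rho : Fin n → ℝ, (∀ y, 0 ≤ rho y) →
      (∑ y, rho y = 1) → Matrix.vecMul rho (P n) = rho → rho = pi n)
    (hkirr : ∀ n : ℕ, 2 ≤ n → ∀ y z : Fin n, y ≠ x n → z ≠ x n →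
      ∃ t : ℕ, 0 < ((killed (P n) (x n)) ^ t) y z)
    (lam : ℕ → ℝ) (mu : (n : ℕ) → Fin n → ℝ)
    (hlam : ∀ n : ℕ, 2 ≤ n → lam n ∈ Set.Ioo (0 : ℝ) 1)
    (hmunn : ∀ n : ℕ, 2 ≤ n → ∀ y : Fin n, 0 ≤ mu n y)
    (hmux : ∀ n : ℕ, 2 ≤ n → mu n (x n) = 0)
    (hmusum : ∀ n : ℕ, 2 ≤ n → ∑ y, mu n y = 1)
    (hmuqs : ∀ n : ℕ, 2 ≤ n →
      Matrix.vecMul (mu n) (killed (P n) (x n)) = lam n • mu n)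
    (HP1 : ∀ ε : ℝ, 0 < ε → ∃ N : ℕ, ∀ n : ℕ, N ≤ n → ∀ y z : Fin n,
      (n : ℝ) ^ c * |(P n ^ T n) y z - pi n z| < ε)
    (HP2 : ∀ ε : ℝ, 0 < ε → ∃ N : ℕ, ∀ n : ℕ, N ≤ n → ∀ y : Fin n,
      (T n : ℝ) * pi n y < ε)
    (HP3 : ∀ M : ℝ, ∃ N : ℕ, ∀ n : ℕ, N ≤ n → ∀ y : Fin n,
      M < (n : ℝ) ^ 2 * pi n y)
    :
    Filter.Tendsto
      (fun n => |lam n / (1 - pi n (x n) / returns (P n) (x n) (T n)) - 1|)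
      Filter.atTop (nhds (0 : ℝ)) :=
  fvtl_rate_identification_general P pi x T c hc hT hnn hrow hpinn hpisum hpistat hkirr lam mu hlam
    hmunn hmux hmusum hmuqs HP1 HP2
end

section
/- Under (HP1)–(HP3), the right Perron eigenvector γ_n of [P_n]_{x_n} asymptotically has stationary mean 1: Σ_{y ≠ x_n} π_n(y) γ_n(y) → 1 as n → ∞. -/
/-!
Write `K` for the kernel killed at `x`, `h_t = K^t 1` for its survival function, `W = max γ`,
`q = λ^T`, and let `b` bound the entries of `|P^T - π|`, with `n b`, `T b`, `T π(x)` all `≤ δ`.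
Mixing puts `P^T γ` uniformly within `b Σ γ ≤ δ W` of `S = π ⬝ γ`. Comparing with
`q γ = K^T γ ≤ P^T γ` at the maximum of `γ`, and averaging the escape term
`(P^T - K^T) γ ≤ (1 - h_T) W` against `μ` (for which `μ ⬝ h_T = q`), squeezes `S` between
`(q - δ) W` and `q + (1 - q + δ) W`; since `W ≥ μ ⬝ γ = 1`, this forces `S → 1` once `q → 1`.

For `q`: started from `π` the chain hits `x` before time `2T` with probability at most `4 T π(x)`,
so some `y` has `h_{2T}(y) > 1/2`, while after mixing `h` loses at most `2 (π(x) + b)` per step.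
Hence `v = (h_{2T} - 1/2)⁺` satisfies `K^T v ≥ (1 - 6 T (π(x) + b)) v`, and pairing with `μ`,
which is positive off `x` by irreducibility of `[P]_x`, gives `λ^T ≥ 1 - 6 T (π(x) + b)`.
-/

open Finset Filter

open Matrix

section NonnegMatrix

variable {ι : Type*} [Fintype ι]

theorem Matrix.le_of_smul_le_mulVec {A : Matrix ι ι ℝ} {μ v : ι → ℝ} {c d : ℝ} (hμ : 0 ≤ μ)
    (hμA : μ ᵥ* A = c • μ) (hv : d • v ≤ A *ᵥ v) (hμv : 0 < μ ⬝ᵥ v) : d ≤ c := by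
  refine le_of_mul_le_mul_right ?_ hμv
  calc d * (μ ⬝ᵥ v) = μ ⬝ᵥ (d • v) := by rw [dotProduct_smul, smul_eq_mul]
    _ ≤ μ ⬝ᵥ (A *ᵥ v) := dotProduct_le_dotProduct_of_nonneg_left hv hμ
    _ = c * (μ ⬝ᵥ v) := by rw [dotProduct_mulVec, hμA, smul_dotProduct, smul_eq_mul]

theorem Matrix.mulVec_le_mulVec_of_nonneg {A : Matrix ι ι ℝ} {u v : ι → ℝ}
    (hA : ∀ i j, 0 ≤ A i j) (huv : u ≤ v) : A *ᵥ u ≤ A *ᵥ v := fun i =>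
  dotProduct_le_dotProduct_of_nonneg_left huv (hA i)

theorem Matrix.abs_mulVec_apply_sub_dotProduct_le {M : Matrix ι ι ℝ} {π g : ι → ℝ} {b : ℝ}
    {y : ι} (hb : ∀ z, |M y z - π z| ≤ b) (hg : 0 ≤ g) :
    |(M *ᵥ g) y - π ⬝ᵥ g| ≤ b * ∑ z, g z := by
  have hsplit : (M *ᵥ g) y - π ⬝ᵥ g = ∑ z, (M y z - π z) * g z := by
    simp [mulVec, dotProduct, sub_mul]
  rw [hsplit, mul_sum]
  refine (abs_sum_le_sum_abs _ _).trans (sum_le_sum fun z _ => ?_)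
  rw [abs_mul, abs_of_nonneg (hg z)]
  exact mul_le_mul_of_nonneg_right (hb z) (hg z)

variable [DecidableEq ι]

theorem Matrix.pow_apply_le_pow_apply_s2 {R : Type*} [Semiring R] [PartialOrder R]
    [IsOrderedRing R] {A B : Matrix ι ι R} (hA : ∀ i j, 0 ≤ A i j)
    (hAB : ∀ i j, A i j ≤ B i j) (t : ℕ) (i j : ι) : (A ^ t) i j ≤ (B ^ t) i j := by
  induction t generalizing i j with
  | zero => exact le_rfl
  | succ t ih =>
    rw [pow_succ, pow_succ, mul_apply, mul_apply]
    exact sum_le_sum fun k _ => mul_le_mul (ih i k) (hAB k j) (hA k j)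
      ((pow_apply_nonneg hA t i k).trans (ih i k))

theorem Matrix.vecMul_pow_of_vecMul_eq_smul_s2 {R : Type*} [CommSemiring R] {A : Matrix ι ι R}
    {v : ι → R} {c : R} (h : v ᵥ* A = c • v) (t : ℕ) : v ᵥ* A ^ t = c ^ t • v := by
  induction t with
  | zero => simp
  | succ t ih => rw [pow_succ, ← vecMul_vecMul, ih, smul_vecMul, h, smul_smul, pow_succ]

theorem Matrix.pow_mulVec_of_mulVec_eq_smul {R : Type*} [CommSemiring R] {A : Matrix ι ι R}
    {v : ι → R} {c : R} (h : A *ᵥ v = c • v) (t : ℕ) : A ^ t *ᵥ v = c ^ t • v := by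
  induction t with
  | zero => simp
  | succ t ih => rw [pow_succ', ← mulVec_mulVec, ih, mulVec_smul, h, smul_smul, pow_succ]

theorem Matrix.pos_of_vecMul_eq_smul {A : Matrix ι ι ℝ} {μ : ι → ℝ} {c : ℝ}
    (hA : ∀ i j, 0 ≤ A i j) (hμ : 0 ≤ μ) (hμA : μ ᵥ* A = c • μ) {i j : ι} (hi : 0 < μ i)
    {t : ℕ} (ht : 0 < (A ^ t) i j) : 0 < μ j := by
  have hpos : 0 < (μ ᵥ* A ^ t) j :=
    sum_pos' (fun k _ => mul_nonneg (hμ k) (pow_apply_nonneg hA t k j))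
      ⟨i, mem_univ i, mul_pos hi ht⟩
  rw [vecMul_pow_of_vecMul_eq_smul_s2 hμA, Pi.smul_apply, smul_eq_mul] at hpos
  exact (hμ j).lt_of_ne fun h => by simp [← h] at hpos

theorem Matrix.abs_pow_apply_sub_le_of_le {P : Matrix ι ι ℝ} (hP : P ∈ rowStochastic ℝ ι)
    {π : ι → ℝ} {b : ℝ} {T s : ℕ} (hb : ∀ y z, |(P ^ T) y z - π z| ≤ b) (hs : T ≤ s)
    (y z : ι) : |(P ^ s) y z - π z| ≤ b := by
  obtain ⟨u, rfl⟩ := Nat.exists_eq_add_of_le' hs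
  have hPu := pow_mem hP u
  have hsplit : (P ^ (u + T)) y z - π z = ∑ w, (P ^ u) y w * ((P ^ T) w z - π z) := by
    simp only [pow_add, mul_apply, mul_sub, sum_sub_distrib, ← sum_mul,
      sum_row_of_mem_rowStochastic hPu, one_mul]
  rw [hsplit]
  calc |∑ w, (P ^ u) y w * ((P ^ T) w z - π z)|
      ≤ ∑ w, (P ^ u) y w * b := by
        refine (abs_sum_le_sum_abs _ _).trans (sum_le_sum fun w _ => ?_)
        rw [abs_mul, abs_of_nonneg (hPu.1 y w)]
        exact mul_le_mul_of_nonneg_left (hb w z) (hPu.1 y w)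
    _ = b := by rw [← sum_mul, sum_row_of_mem_rowStochastic hPu, one_mul]

end NonnegMatrix

section Killed

variable {n : ℕ} {P : Matrix (Fin n) (Fin n) ℝ} {x : Fin n}

theorem killed_apply_nonneg (hP : ∀ y z, 0 ≤ P y z) (y z : Fin n) : 0 ≤ killed P x y z := by
  rw [killed, of_apply]
  split_ifs
  exacts [le_rfl, hP y z]

theorem killed_apply_le (hP : ∀ y z, 0 ≤ P y z) (y z : Fin n) : killed P x y z ≤ P y z := by
  rw [killed, of_apply]
  split_ifs
  exacts [hP y z, le_rfl]

theorem killed_pow_apply_le (hP : ∀ y z, 0 ≤ P y z) (t : ℕ) (y z : Fin n) :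
    (killed P x ^ t) y z ≤ (P ^ t) y z :=
  pow_apply_le_pow_apply_s2 (killed_apply_nonneg hP) (killed_apply_le hP) t y z

theorem killed_mulVec_apply_self (v : Fin n → ℝ) : (killed P x *ᵥ v) x = 0 := by
  simp [killed, mulVec, dotProduct]

theorem one_sub_killed_mulVec_one_apply (hP : ∀ y, ∑ z, P y z = 1) (w : Fin n) :
    1 - (killed P x *ᵥ 1) w = if w = x then 1 else P w x := by
  split_ifs with hw
  · rw [hw, killed_mulVec_apply_self, sub_zero]
  · have hrow : (killed P x *ᵥ 1) w = ∑ z, P w z - P w x := by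
      simp [killed, mulVec, dotProduct, hw, sum_ite, filter_ne']
    rw [hrow, hP w]
    ring

/-- `survival P x t y` is `ℙ_y(τ_x > t)` for `y ≠ x`, with `τ_x` the hitting time of `x`. -/
def survival (P : Matrix (Fin n) (Fin n) ℝ) (x : Fin n) (t : ℕ) : Fin n → ℝ :=
  killed P x ^ t *ᵥ 1

theorem survival_zero : survival P x 0 = 1 := by
  simp [survival]

theorem killed_pow_mulVec_survival (s t : ℕ) :
    killed P x ^ s *ᵥ survival P x t = survival P x (s + t) := by
  rw [survival, survival, mulVec_mulVec, pow_add]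

theorem survival_apply_self {t : ℕ} (ht : t ≠ 0) : survival P x t x = 0 := by
  obtain ⟨s, rfl⟩ := Nat.exists_eq_succ_of_ne_zero ht
  rw [survival, pow_succ', ← mulVec_mulVec, killed_mulVec_apply_self]

theorem survival_le_one (hP : P ∈ rowStochastic ℝ (Fin n)) (t : ℕ) :
    survival P x t ≤ 1 := fun y => by
  calc survival P x t y = ∑ z, (killed P x ^ t) y z := by simp [survival, mulVec, dotProduct]
    _ ≤ ∑ z, (P ^ t) y z := sum_le_sum fun z _ => killed_pow_apply_le hP.1 t y z
    _ = 1 := sum_row_of_mem_rowStochastic (pow_mem hP t) y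

theorem survival_sub_survival_succ_le (hP : P ∈ rowStochastic ℝ (Fin n)) (t : ℕ) (y : Fin n) :
    survival P x t y - survival P x (t + 1) y ≤ (P ^ t) y x + (P ^ (t + 1)) y x := by
  have hP' := mem_rowStochastic_iff_sum.1 hP
  calc survival P x t y - survival P x (t + 1) y
      = ∑ w, (killed P x ^ t) y w * (1 - (killed P x *ᵥ 1) w) := by
        rw [survival, survival, pow_succ, ← mulVec_mulVec, ← Pi.sub_apply, ← mulVec_sub]
        rfl
    _ ≤ ∑ w, (P ^ t) y w * ((if w = x then 1 else 0) + P w x) := by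
        refine sum_le_sum fun w _ => ?_
        rw [one_sub_killed_mulVec_one_apply hP'.2]
        refine mul_le_mul (killed_pow_apply_le hP'.1 t y w) ?_ (by split_ifs <;> simp [hP'.1])
          (pow_apply_nonneg hP'.1 t y w)
        split_ifs with hw
        · simp [hP'.1]
        · simp
    _ = (P ^ t) y x + (P ^ (t + 1)) y x := by
        simp [mul_add, sum_add_distrib, pow_succ, mul_apply]

theorem dotProduct_survival {μ : Fin n → ℝ} {lam : ℝ} (hμ : μ ᵥ* killed P x = lam • μ)
    (hμ1 : ∑ y, μ y = 1) (t : ℕ) : μ ⬝ᵥ survival P x t = lam ^ t := by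
  rw [survival, dotProduct_mulVec, vecMul_pow_of_vecMul_eq_smul_s2 hμ, smul_dotProduct,
    dotProduct_one, hμ1, smul_eq_mul, mul_one]

end Killed

section Mixing

variable {n : ℕ} {P : Matrix (Fin n) (Fin n) ℝ} {x : Fin n} {π : Fin n → ℝ}

theorem one_sub_le_dotProduct_survival (hP : P ∈ rowStochastic ℝ (Fin n)) (hπ : 0 ≤ π)
    (hπ1 : ∑ y, π y = 1) (hπP : π ᵥ* P = π) (t : ℕ) :
    1 - 2 * t * π x ≤ π ⬝ᵥ survival P x t := by
  induction t with
  | zero => simp [survival_zero, dotProduct_one, hπ1]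
  | succ t ih =>
    have hstat (s : ℕ) : ∑ y, π y * (P ^ s) y x = π x := by
      have := vecMul_pow_of_vecMul_eq_smul_s2 (A := P) (v := π) (c := 1) (by rw [one_smul, hπP]) s
      rw [one_pow, one_smul] at this
      exact congrFun this x
    have hloss : π ⬝ᵥ survival P x t - π ⬝ᵥ survival P x (t + 1) ≤ 2 * π x :=
      calc π ⬝ᵥ survival P x t - π ⬝ᵥ survival P x (t + 1)
          = ∑ y, π y * (survival P x t y - survival P x (t + 1) y) := by
            simp only [dotProduct, mul_sub, sum_sub_distrib]
        _ ≤ ∑ y, π y * ((P ^ t) y x + (P ^ (t + 1)) y x) := sum_le_sum fun y _ =>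
            mul_le_mul_of_nonneg_left (survival_sub_survival_succ_le hP t y) (hπ y)
        _ = 2 * π x := by simp only [mul_add, sum_add_distrib, hstat]; ring
    push_cast
    linarith

theorem survival_sub_survival_add_le (hP : P ∈ rowStochastic ℝ (Fin n)) {b : ℝ} {T s : ℕ}
    (hb : ∀ y z, |(P ^ T) y z - π z| ≤ b) (hs : T ≤ s) (u : ℕ) (y : Fin n) :
    survival P x s y - survival P x (s + u) y ≤ 2 * u * (π x + b) := by
  induction u with
  | zero => simp
  | succ u ih =>
    have h₁ := abs_le.1 (abs_pow_apply_sub_le_of_le (s := s + u) hP hb (by omega) y x)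
    have h₂ := abs_le.1 (abs_pow_apply_sub_le_of_le (s := s + u + 1) hP hb (by omega) y x)
    have := survival_sub_survival_succ_le (x := x) hP (s + u) y
    rw [← add_assoc]
    push_cast
    linarith

end Mixing

section QuasiStationary

variable {n : ℕ} {P : Matrix (Fin n) (Fin n) ℝ} {x : Fin n} {μ : Fin n → ℝ} {lam : ℝ}

theorem pos_of_vecMul_killed_eq_smul (hP : ∀ y z, 0 ≤ P y z)
    (hK : ∀ y z, y ≠ x → z ≠ x → ∃ t : ℕ, 0 < (killed P x ^ t) y z) (hμ0 : 0 ≤ μ)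
    (hμx : μ x = 0) (hμ1 : ∑ y, μ y = 1) (hμ : μ ᵥ* killed P x = lam • μ) {z : Fin n}
    (hz : z ≠ x) : 0 < μ z := by
  obtain ⟨y, hy⟩ : ∃ y, 0 < μ y := by
    by_contra! h
    have : ∑ y, μ y = 0 := sum_eq_zero fun y _ => le_antisymm (h y) (hμ0 y)
    linarith
  obtain ⟨t, ht⟩ := hK y z (fun h => by simp [h, hμx] at hy) hz
  exact pos_of_vecMul_eq_smul (killed_apply_nonneg hP) hμ0 hμ hy ht

theorem smul_le_killed_pow_mulVec_survival_posPart (hP : P ∈ rowStochastic ℝ (Fin n))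
    {T : ℕ} {a : ℝ} (ha : a ≤ 1 / 6)
    (h₁ : ∀ y, survival P x T y - survival P x (2 * T) y ≤ a)
    (h₂ : ∀ y, survival P x (2 * T) y - survival P x (3 * T) y ≤ a) :
    (1 - 3 * a) • (fun w => max (survival P x (2 * T) w - 1 / 2) 0) ≤
      killed P x ^ T *ᵥ fun w => max (survival P x (2 * T) w - 1 / 2) 0 := by
  intro y
  have hK := pow_apply_nonneg (killed_apply_nonneg (x := x) hP.1) T
  have hmono := mulVec_le_mulVec_of_nonneg hK (u := survival P x (2 * T) - (1 / 2 : ℝ) • 1)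
    (v := fun w => max (survival P x (2 * T) w - 1 / 2) 0) (fun w => by simp) y
  rw [mulVec_sub, mulVec_smul, killed_pow_mulVec_survival, ← survival,
    show T + 2 * T = 3 * T by ring] at hmono
  simp only [Pi.smul_apply, Pi.sub_apply, smul_eq_mul] at hmono ⊢
  have hle : survival P x (2 * T) y ≤ 1 := survival_le_one hP (2 * T) y
  rcases le_or_gt (survival P x (2 * T) y) (1 / 2) with hy | hy
  · rw [max_eq_right (by linarith), mul_zero]
    simpa using mulVec_le_mulVec_of_nonneg hK (u := 0) (fun w => le_max_right _ _) y
  · rw [max_eq_left (by linarith)]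
    -- with `h = h_{2T}(y)`, the slack `h_{3T} - h_T / 2 - (1 - 3a)(h - 1/2)` is at least
    -- `(1 - h)(1/2 - 3a) ≥ 0`
    nlinarith [h₁ y, h₂ y, mul_nonneg (sub_nonneg.2 hle) (by linarith : (0 : ℝ) ≤ 1 / 2 - 3 * a)]

theorem one_sub_le_pow_of_mixing (hP : P ∈ rowStochastic ℝ (Fin n)) {π : Fin n → ℝ}
    (hπ : 0 ≤ π) (hπ1 : ∑ y, π y = 1) (hπP : π ᵥ* P = π)
    (hK : ∀ y z, y ≠ x → z ≠ x → ∃ t : ℕ, 0 < (killed P x ^ t) y z) (hμ0 : 0 ≤ μ)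
    (hμx : μ x = 0) (hμ1 : ∑ y, μ y = 1) (hμ : μ ᵥ* killed P x = lam • μ) {b : ℝ} {T : ℕ}
    (hb : ∀ y z, |(P ^ T) y z - π z| ≤ b) (hT : T ≠ 0) (hsmall : 12 * T * (π x + b) ≤ 1) :
    1 - 6 * T * (π x + b) ≤ lam ^ T := by
  set v : Fin n → ℝ := fun w => max (survival P x (2 * T) w - 1 / 2) 0
  have hb0 : 0 ≤ b := (abs_nonneg _).trans (hb x x)
  have hv : (1 - 3 * (2 * T * (π x + b))) • v ≤ killed P x ^ T *ᵥ v := by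
    refine smul_le_killed_pow_mulVec_survival_posPart hP (by linarith) (fun y => ?_) fun y => ?_
    · simpa [two_mul] using survival_sub_survival_add_le hP hb le_rfl T y
    · have := survival_sub_survival_add_le (x := x) hP hb (s := 2 * T) (by omega) T y
      rwa [show 2 * T + T = 3 * T by ring] at this
  obtain ⟨y, hy⟩ : ∃ y, 1 / 2 < survival P x (2 * T) y := by
    by_contra! h
    have hmean := one_sub_le_dotProduct_survival (x := x) hP hπ hπ1 hπP (2 * T)
    have : π ⬝ᵥ survival P x (2 * T) ≤ 1 / 2 := calc
      _ ≤ π ⬝ᵥ fun _ => 1 / 2 := dotProduct_le_dotProduct_of_nonneg_left h hπ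
      _ = 1 / 2 := by simp [dotProduct, ← sum_mul, hπ1]
    push_cast at hmean
    nlinarith [mul_nonneg (Nat.cast_nonneg T : (0 : ℝ) ≤ T) hb0]
  have hyx : y ≠ x := by
    rintro rfl
    rw [survival_apply_self (by omega)] at hy
    norm_num at hy
  have hμv : 0 < μ ⬝ᵥ v :=
    sum_pos' (fun w _ => mul_nonneg (hμ0 w) (le_max_right _ _)) ⟨y, mem_univ y,
      mul_pos (pos_of_vecMul_killed_eq_smul hP.1 hK hμ0 hμx hμ1 hμ hyx) (by simp [v]; linarith)⟩
  have := le_of_smul_le_mulVec hμ0 (vecMul_pow_of_vecMul_eq_smul_s2 hμ T) hv hμv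
  linarith

end QuasiStationary

section PerronVector

variable {n : ℕ} {P : Matrix (Fin n) (Fin n) ℝ} {x : Fin n} {π γ : Fin n → ℝ} {lam b : ℝ}
  {T : ℕ}

theorem pow_mul_apply_le_dotProduct_add (hP : ∀ y z, 0 ≤ P y z) (hγ0 : 0 ≤ γ)
    (hγ : killed P x *ᵥ γ = lam • γ) (hb : ∀ y z, |(P ^ T) y z - π z| ≤ b) (y : Fin n) :
    lam ^ T * γ y ≤ π ⬝ᵥ γ + b * ∑ z, γ z := by
  have hmix := (abs_le.1 (abs_mulVec_apply_sub_dotProduct_le (hb y) hγ0)).2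
  have hkill : (killed P x ^ T *ᵥ γ) y ≤ (P ^ T *ᵥ γ) y :=
    dotProduct_le_dotProduct_of_nonneg_right (fun z => killed_pow_apply_le hP T y z) hγ0
  rw [pow_mulVec_of_mulVec_eq_smul hγ] at hkill
  simp only [Pi.smul_apply, smul_eq_mul] at hkill
  linarith

theorem pow_mulVec_apply_le (hP : P ∈ rowStochastic ℝ (Fin n)) (hγ : killed P x *ᵥ γ = lam • γ)
    {W : ℝ} (hW : ∀ z, γ z ≤ W) (y : Fin n) :
    (P ^ T *ᵥ γ) y ≤ lam ^ T * γ y + (1 - survival P x T y) * W := by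
  have hsplit : (P ^ T *ᵥ γ) y = (killed P x ^ T *ᵥ γ) y +
      ∑ z, ((P ^ T) y z - (killed P x ^ T) y z) * γ z := by
    simp [mulVec, dotProduct, sub_mul]
  have hescape : ∑ z, ((P ^ T) y z - (killed P x ^ T) y z) * γ z ≤
      (1 - survival P x T y) * W := calc
    _ ≤ ∑ z, ((P ^ T) y z - (killed P x ^ T) y z) * W := sum_le_sum fun z _ =>
        mul_le_mul_of_nonneg_left (hW z) (sub_nonneg.2 (killed_pow_apply_le hP.1 T y z))
    _ = (1 - survival P x T y) * W := by
        rw [← sum_mul, sum_sub_distrib, sum_row_of_mem_rowStochastic (pow_mem hP T)]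
        simp [survival, mulVec, dotProduct]
  rw [hsplit, pow_mulVec_of_mulVec_eq_smul hγ]
  simpa using hescape

theorem dotProduct_sub_le_pow_add (hP : P ∈ rowStochastic ℝ (Fin n)) {μ : Fin n → ℝ}
    (hμ0 : 0 ≤ μ) (hμ1 : ∑ y, μ y = 1) (hμ : μ ᵥ* killed P x = lam • μ) (hγ0 : 0 ≤ γ)
    (hγ : killed P x *ᵥ γ = lam • γ) (hμγ : μ ⬝ᵥ γ = 1) (hb : ∀ y z, |(P ^ T) y z - π z| ≤ b)
    {W : ℝ} (hW : ∀ z, γ z ≤ W) :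
    π ⬝ᵥ γ - b * ∑ z, γ z ≤ lam ^ T + (1 - lam ^ T) * W := by
  have hpt : (π ⬝ᵥ γ - b * ∑ z, γ z) • (1 : Fin n → ℝ) ≤ lam ^ T • γ + W • (1 - survival P x T) :=
    fun y => by
      have := (abs_le.1 (abs_mulVec_apply_sub_dotProduct_le (hb y) hγ0)).1
      have := pow_mulVec_apply_le (T := T) hP hγ hW y
      simp only [Pi.add_apply, Pi.smul_apply, Pi.sub_apply, Pi.one_apply, smul_eq_mul, mul_one]
      linarith
  have := dotProduct_le_dotProduct_of_nonneg_left hpt hμ0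
  simp only [dotProduct_add, dotProduct_smul, dotProduct_sub, hμγ, dotProduct_survival hμ hμ1,
    dotProduct_one, hμ1, smul_eq_mul] at this
  linarith

end PerronVector

theorem abs_sub_one_le_of_perron_bounds {S W q δ η : ℝ} (hW : 1 ≤ W) (hq : 1 - η ≤ q)
    (hδ : 0 ≤ δ) (hη : 0 ≤ η) (hsmall : δ + η ≤ 1 / 4) (hup : q * W ≤ S + δ * W)
    (hdown : S - δ * W ≤ q + (1 - q) * W) : |S - 1| ≤ 2 * (δ + η) := by
  rw [abs_le]
  constructor
  · nlinarith
  · nlinarith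

theorem abs_dotProduct_sub_one_le {n : ℕ} {P : Matrix (Fin n) (Fin n) ℝ} {x : Fin n}
    (hP : P ∈ rowStochastic ℝ (Fin n)) {π : Fin n → ℝ} (hπ : 0 ≤ π) (hπ1 : ∑ y, π y = 1)
    (hπP : π ᵥ* P = π) (hK : ∀ y z, y ≠ x → z ≠ x → ∃ t : ℕ, 0 < (killed P x ^ t) y z)
    {lam : ℝ} {μ γ : Fin n → ℝ} (hμ0 : 0 ≤ μ) (hμx : μ x = 0) (hμ1 : ∑ y, μ y = 1)
    (hμ : μ ᵥ* killed P x = lam • μ) (hγ0 : 0 ≤ γ) (hγ : killed P x *ᵥ γ = lam • γ)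
    (hμγ : μ ⬝ᵥ γ = 1) {b δ : ℝ} {T : ℕ} (hb : ∀ y z, |(P ^ T) y z - π z| ≤ b) (hT : T ≠ 0)
    (hδ : δ ≤ 1 / 52) (hTπ : T * π x ≤ δ) (hTb : T * b ≤ δ) (hnb : n * b ≤ δ) :
    |π ⬝ᵥ γ - 1| ≤ 26 * δ := by
  obtain ⟨y, -, hy⟩ := exists_max_image univ γ ⟨x, mem_univ x⟩
  have hW : ∀ z, γ z ≤ γ y := fun z => hy z (mem_univ z)
  have hW1 : 1 ≤ γ y := calc
    1 = μ ⬝ᵥ γ := hμγ.symm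
    _ ≤ μ ⬝ᵥ fun _ => γ y := dotProduct_le_dotProduct_of_nonneg_left hW hμ0
    _ = γ y := by simp [dotProduct, ← sum_mul, hμ1]
  have hb0 : 0 ≤ b := (abs_nonneg _).trans (hb x x)
  have hsum : b * ∑ z, γ z ≤ δ * γ y := calc
    b * ∑ z, γ z ≤ b * (n * γ y) := by
      gcongr
      simpa using sum_le_sum fun z (_ : z ∈ univ) => hW z
    _ ≤ δ * γ y := by nlinarith
  have hq := one_sub_le_pow_of_mixing hP hπ hπ1 hπP hK hμ0 hμx hμ1 hμ hb hT (by nlinarith)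
  have hup := pow_mul_apply_le_dotProduct_add hP.1 hγ0 hγ hb y
  have hdown := dotProduct_sub_le_pow_add hP hμ0 hμ1 hμ hγ0 hγ hμγ hb hW
  have hTπ0 : 0 ≤ T * π x := mul_nonneg T.cast_nonneg (hπ x)
  calc |π ⬝ᵥ γ - 1| ≤ 2 * (δ + 6 * T * (π x + b)) :=
        abs_sub_one_le_of_perron_bounds hW1 hq (by linarith) (by nlinarith) (by nlinarith)
          (by linarith) (by linarith)
    _ ≤ 26 * δ := by nlinarith

theorem mul_div_rpow_le {m N c δ : ℝ} (hδ : 0 ≤ δ) (hN : 1 ≤ N) (hc : 2 ≤ c) (hm : m ≤ N ^ 2) :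
    m * (δ / N ^ c) ≤ δ := by
  have hNc : N ^ 2 ≤ N ^ c := by
    simpa using Real.rpow_le_rpow_of_exponent_le hN (show ((2 : ℕ) : ℝ) ≤ c by simpa)
  rw [mul_div_assoc', div_le_iff₀ (by positivity)]
  nlinarith

theorem gamma_stationary_mean_one_general
    (P : (n : ℕ) → Matrix (Fin n) (Fin n) ℝ)
    (pi : (n : ℕ) → Fin n → ℝ)
    (x : (n : ℕ) → Fin n)
    (T : ℕ → ℕ) (c : ℝ)
    (hc : 2 < c)
    (hT : Filter.Tendsto T Filter.atTop Filter.atTop)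
    (hnn : ∀ n : ℕ, 2 ≤ n → ∀ y z : Fin n, 0 ≤ P n y z)
    (hrow : ∀ n : ℕ, 2 ≤ n → ∀ y : Fin n, ∑ z, P n y z = 1)
    (hpinn : ∀ n : ℕ, 2 ≤ n → ∀ y : Fin n, 0 ≤ pi n y)
    (hpisum : ∀ n : ℕ, 2 ≤ n → ∑ y, pi n y = 1)
    (hpistat : ∀ n : ℕ, 2 ≤ n → Matrix.vecMul (pi n) (P n) = pi n)
    (hkirr : ∀ n : ℕ, 2 ≤ n → ∀ y z : Fin n, y ≠ x n → z ≠ x n →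
      ∃ t : ℕ, 0 < ((killed (P n) (x n)) ^ t) y z)
    (lam : ℕ → ℝ) (mu : (n : ℕ) → Fin n → ℝ)
    (hmunn : ∀ n : ℕ, 2 ≤ n → ∀ y : Fin n, 0 ≤ mu n y)
    (hmux : ∀ n : ℕ, 2 ≤ n → mu n (x n) = 0)
    (hmusum : ∀ n : ℕ, 2 ≤ n → ∑ y, mu n y = 1)
    (hmuqs : ∀ n : ℕ, 2 ≤ n →
      Matrix.vecMul (mu n) (killed (P n) (x n)) = lam n • mu n)
    (gamma : (n : ℕ) → Fin n → ℝ)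
    (hgx : ∀ n : ℕ, 2 ≤ n → gamma n (x n) = 0)
    (hgpos : ∀ n : ℕ, 2 ≤ n → ∀ y : Fin n, y ≠ x n → 0 < gamma n y)
    (hgeig : ∀ n : ℕ, 2 ≤ n →
      Matrix.mulVec (killed (P n) (x n)) (gamma n) = lam n • gamma n)
    (hgnorm : ∀ n : ℕ, 2 ≤ n →
      ∑ y ∈ Finset.univ.erase (x n), mu n y * gamma n y = 1)
    (HP1 : ∀ ε : ℝ, 0 < ε → ∃ N : ℕ, ∀ n : ℕ, N ≤ n → ∀ y z : Fin n,
      (n : ℝ) ^ c * |(P n ^ T n) y z - pi n z| < ε)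
    (HP2 : ∀ ε : ℝ, 0 < ε → ∃ N : ℕ, ∀ n : ℕ, N ≤ n → ∀ y : Fin n,
      (T n : ℝ) * pi n y < ε)
    (HP3 : ∀ M : ℝ, ∃ N : ℕ, ∀ n : ℕ, N ≤ n → ∀ y : Fin n,
      M < (n : ℝ) ^ 2 * pi n y)
    :
    Filter.Tendsto
      (fun n => ∑ y ∈ Finset.univ.erase (x n), pi n y * gamma n y)
      Filter.atTop (nhds (1 : ℝ)) := by
  refine Metric.tendsto_nhds.2 fun ε hε => ?_
  obtain ⟨δ, hδ0, hδ, hδε⟩ : ∃ δ : ℝ, 0 < δ ∧ δ ≤ 1 / 52 ∧ 26 * δ < ε :=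
    ⟨min (ε / 52) (1 / 52), by positivity, min_le_right _ _,
      by linarith [min_le_left (ε / 52) (1 / 52)]⟩
  have hTn : ∀ᶠ n in atTop, (T n : ℝ) ≤ (n : ℝ) ^ 2 := by
    filter_upwards [eventually_atTop.2 (HP2 1 one_pos), eventually_atTop.2 (HP3 1)]
      with n hTpi hnpi
    nlinarith [hTpi (x n), hnpi (x n)]
  filter_upwards [eventually_atTop.2 (HP1 δ hδ0), eventually_atTop.2 (HP2 δ hδ0), hTn,
    hT.eventually_ne_atTop 0, eventually_ge_atTop 2] with n hmix hTpi hTn hT0 hn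
  have hn1 : (1 : ℝ) ≤ n := by exact_mod_cast one_le_two.trans hn
  have hb : ∀ y z, |(P n ^ T n) y z - pi n z| ≤ δ / (n : ℝ) ^ c := fun y z =>
    (le_div_iff₀' (by positivity)).2 (hmix y z).le
  have hγ0 : 0 ≤ gamma n := fun y =>
    if h : y = x n then (h ▸ hgx n hn).ge else (hgpos n hn y h).le
  have hμγ : mu n ⬝ᵥ gamma n = 1 := by
    rw [← hgnorm n hn, sum_erase univ (by simp [hmux n hn])]
    rfl
  rw [Real.dist_eq, sum_erase univ (by simp [hgx n hn])]
  refine (abs_dotProduct_sub_one_le (mem_rowStochastic_iff_sum.2 ⟨hnn n hn, hrow n hn⟩)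
    (hpinn n hn) (hpisum n hn) (hpistat n hn) (hkirr n hn) (hmunn n hn) (hmux n hn)
    (hmusum n hn) (hmuqs n hn) hγ0 (hgeig n hn) hμγ hb hT0 hδ (hTpi (x n)).le
    (mul_div_rpow_le hδ0.le hn1 hc.le hTn) (mul_div_rpow_le hδ0.le hn1 hc.le ?_)).trans_lt hδε
  nlinarith

theorem gamma_stationary_mean_one
    (P : (n : ℕ) → Matrix (Fin n) (Fin n) ℝ)
    (pi : (n : ℕ) → Fin n → ℝ)
    (x : (n : ℕ) → Fin n)
    (T : ℕ → ℕ) (c : ℝ)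
    (hc : 2 < c)
    (hT : Filter.Tendsto T Filter.atTop Filter.atTop)
    (hnn : ∀ n : ℕ, 2 ≤ n → ∀ y z : Fin n, 0 ≤ P n y z)
    (hrow : ∀ n : ℕ, 2 ≤ n → ∀ y : Fin n, ∑ z, P n y z = 1)
    (hirr : ∀ n : ℕ, 2 ≤ n → ∀ y z : Fin n, ∃ t : ℕ, 0 < (P n ^ t) y z)
    (hpinn : ∀ n : ℕ, 2 ≤ n → ∀ y : Fin n, 0 ≤ pi n y)
    (hpisum : ∀ n : ℕ, 2 ≤ n → ∑ y, pi n y = 1)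
    (hpistat : ∀ n : ℕ, 2 ≤ n → Matrix.vecMul (pi n) (P n) = pi n)
    (hpiuniq : ∀ n : ℕ, 2 ≤ n → ∀ rho : Fin n → ℝ, (∀ y, 0 ≤ rho y) →
      (∑ y, rho y = 1) → Matrix.vecMul rho (P n) = rho → rho = pi n)
    (hkirr : ∀ n : ℕ, 2 ≤ n → ∀ y z : Fin n, y ≠ x n → z ≠ x n →
      ∃ t : ℕ, 0 < ((killed (P n) (x n)) ^ t) y z)
    (lam : ℕ → ℝ) (mu : (n : ℕ) → Fin n → ℝ)
    (hlam : ∀ n : ℕ, 2 ≤ n → lam n ∈ Set.Ioo (0 : ℝ) 1)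
    (hmunn : ∀ n : ℕ, 2 ≤ n → ∀ y : Fin n, 0 ≤ mu n y)
    (hmux : ∀ n : ℕ, 2 ≤ n → mu n (x n) = 0)
    (hmusum : ∀ n : ℕ, 2 ≤ n → ∑ y, mu n y = 1)
    (hmuqs : ∀ n : ℕ, 2 ≤ n →
      Matrix.vecMul (mu n) (killed (P n) (x n)) = lam n • mu n)
    (gamma : (n : ℕ) → Fin n → ℝ)
    (hgx : ∀ n : ℕ, 2 ≤ n → gamma n (x n) = 0)
    (hgpos : ∀ n : ℕ, 2 ≤ n → ∀ y : Fin n, y ≠ x n → 0 < gamma n y)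
    (hgeig : ∀ n : ℕ, 2 ≤ n →
      Matrix.mulVec (killed (P n) (x n)) (gamma n) = lam n • gamma n)
    (hgnorm : ∀ n : ℕ, 2 ≤ n →
      ∑ y ∈ Finset.univ.erase (x n), mu n y * gamma n y = 1)
    (HP1 : ∀ ε : ℝ, 0 < ε → ∃ N : ℕ, ∀ n : ℕ, N ≤ n → ∀ y z : Fin n,
      (n : ℝ) ^ c * |(P n ^ T n) y z - pi n z| < ε)
    (HP2 : ∀ ε : ℝ, 0 < ε → ∃ N : ℕ, ∀ n : ℕ, N ≤ n → ∀ y : Fin n,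
      (T n : ℝ) * pi n y < ε)
    (HP3 : ∀ M : ℝ, ∃ N : ℕ, ∀ n : ℕ, N ≤ n → ∀ y : Fin n,
      M < (n : ℝ) ^ 2 * pi n y)
    :
    Filter.Tendsto
      (fun n => ∑ y ∈ Finset.univ.erase (x n), pi n y * gamma n y)
      Filter.atTop (nhds (1 : ℝ)) :=
  gamma_stationary_mean_one_general P pi x T c hc hT hnn hrow hpinn hpisum hpistat hkirr lam mu
    hmunn hmux hmusum hmuqs gamma hgx hgpos hgeig hgnorm HP1 HP2 HP3
end
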